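/- Let H be a finite group of odd order such that d(H) = 2. Then the nim-number of the achievement game GEN((Z/2 × Z/2) × H) is *1. -/

import Mathlib

universe u

/-- Ordinals with nimber arithmetic (Mathlib's former `Nimber`, a type synonym of `Ordinal`). -/
def Nimber : Type (u + 1) := Ordinal.{u}

namespace Nimber

/-- The identity `Ordinal → Nimber` (Mathlib's former `toNimber`). -/
def toNimber : Ordinal.{u} → Nimber.{u} := id

/-- The identity `Nimber → Ordinal` (Mathlib's former `Nimber.toOrdinal`). -/
def toOrdinal : Nimber.{u} → Ordinal.{u} := id

end Nimber

prefix:75 "∗" => Nimber.toNimber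

namespace SetTheory

/-- Mathlib's former pre-games. -/
inductive PGame : Type (u + 1)
  | mk : ∀ α β : Type u, (α → PGame) → (β → PGame) → PGame

namespace PGame

/-- The zero pre-game, with no moves. -/
instance : Zero PGame.{u} :=
  ⟨PGame.mk PEmpty PEmpty PEmpty.elim PEmpty.elim⟩

/-- The Grundy value of an impartial pre-game: the mex of the Grundy values of its left options. -/
noncomputable def grundyValue : PGame.{u} → Nimber.{u}
  | PGame.mk _ _ L _ =>
    Nimber.toNimber (sInf (Set.range fun i => Nimber.toOrdinal (grundyValue (L i)))ᶜ)

end PGame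

end SetTheory

open SetTheory Nimber
open scoped Classical

/-- The achievement game `GEN(G)` of Anderson and Harary: positions are (finite) subsets
of the finite group `G`; a position that generates `G` is terminal, and otherwise the
options are obtained by selecting a previously-unselected element of `G`.  The game is
impartial, so the left and right options agree. -/
noncomputable def genGame {G : Type} [Group G] [Fintype G] (P : Finset G) : PGame :=
  if Subgroup.closure (P : Set G) = ⊤ then 0
  else
    PGame.mk {g : G // g ∉ P} {g : G // g ∉ P}
      (fun g => genGame (insert g.1 P)) (fun g => genGame (insert g.1 P))
termination_by Fintype.card G - P.card
decreasing_by
  all_goals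
    have h1 : (insert g.1 P).card = P.card + 1 := Finset.card_insert_of_notMem g.2
    have h2 : (insert g.1 P).card ≤ Fintype.card G := Finset.card_le_univ _
    omega

/-- The nim-number of the achievement game `GEN(G)`, i.e. the Sprague-Grundy value of the
starting position `∅`. -/
noncomputable def nimGEN (G : Type) [Group G] [Fintype G] : Nimber :=
  PGame.grundyValue (genGame (∅ : Finset G))

/-- `d(G)`: the minimal cardinality of a generating set of `G`. -/
noncomputable def minGen (G : Type) [Group G] : ℕ :=
  sInf {n : ℕ | ∃ S : Finset G, S.card = n ∧ Subgroup.closure (S : Set G) = ⊤}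

/-!
Write `V = ℤ/2 × ℤ/2`. Since `|V| = 4` and `|H|` is odd, the subgroup of `V × H` generated by a
set `P` is `A × B`, where `A` and `B` are generated by the two projections of `P`; so the game only
sees `A`, `B` and the parity of `|P|`. Call `B` one step from the top if `⟨B, x⟩ = H` for some `x`.
The positions of nim-value `0` are the terminal ones, the even ones with `A ≠ 1` and `B` not one
step from the top, and the odd ones with `A = 1` and `B` one step from the top; every other
position has value `1` if `|P|` is even and `2` if it is odd. The mex conditions follow from three
facts about `V` (it is not cyclic, its nontrivial subgroups have even order, and each of them is
one step from the top) and two about `H` (it is generated by a pair `{x, y}`, so `⟨x⟩` is one step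
from the top, and its order is odd). Several moves are found by counting: `P` lies in `A × B`,
of even order when `A ≠ 1`, and in `1 × H`, of odd order, when `A = 1`; so a position of the
other parity leaves an unchosen element there. The empty position is even with `A = 1`, so its
value is `1`.
-/

open scoped Finset

@[simp]
theorem Nimber.toOrdinal_toNimber (a : Ordinal) : toOrdinal (∗a) = a := rfl

theorem SetTheory.PGame.grundyValue_zero : grundyValue (0 : PGame.{u}) = ∗0 := by
  show ∗(sInf (Set.range fun i : PEmpty => _)ᶜ) = ∗0
  rw [Set.range_eq_empty, Set.compl_empty, csInf_univ]
  rfl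

theorem Finset.exists_mem_notMem_of_card_ne_natCard {α : Type*} {P : Finset α} {s : Set α}
    (hP : ↑P ⊆ s) (h : #P ≠ Nat.card s) : ∃ g ∈ s, g ∉ P := by
  by_contra! hs
  rw [subset_antisymm hs hP, Nat.card_coe_set_eq, Set.ncard_coe_finset] at h
  exact h rfl

theorem Finset.even_card_insert_iff {α : Type*} [DecidableEq α] {P : Finset α} {g : α}
    (hg : g ∉ P) : Even #(insert g P) ↔ Odd #P := by
  rw [card_insert_of_notMem hg, Nat.even_add_one, Nat.not_even_iff_odd]

theorem Finset.odd_card_insert_iff {α : Type*} [DecidableEq α] {P : Finset α} {g : α}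
    (hg : g ∉ P) : Odd #(insert g P) ↔ Even #P := by
  rw [card_insert_of_notMem hg, Nat.odd_add_one, Nat.not_odd_iff_even]

section genGame

variable {G : Type} [Group G] [Fintype G]

theorem genGame_of_closure_eq_top {P : Finset G} (hP : Subgroup.closure (P : Set G) = ⊤) :
    genGame P = 0 := by
  rw [genGame, if_pos hP]

variable [DecidableEq G]

theorem genGame_of_closure_ne_top {P : Finset G} (hP : Subgroup.closure (P : Set G) ≠ ⊤) :
    genGame P = PGame.mk {g // g ∉ P} {g // g ∉ P}
      (fun g => genGame (insert g.1 P)) (fun g => genGame (insert g.1 P)) := by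
  rw [genGame, if_neg hP]
  congr!

theorem grundyValue_genGame_eq (f : Finset G → ℕ)
    (h_terminal : ∀ P : Finset G, Subgroup.closure (P : Set G) = ⊤ → f P = 0)
    (h_ne : ∀ P : Finset G, Subgroup.closure (P : Set G) ≠ ⊤ → ∀ g ∉ P, f (insert g P) ≠ f P)
    (h_lt : ∀ P : Finset G, Subgroup.closure (P : Set G) ≠ ⊤ →
      ∀ m < f P, ∃ g ∉ P, f (insert g P) = m)
    (P : Finset G) : PGame.grundyValue (genGame P) = ∗(f P) := by
  by_cases hP : Subgroup.closure (P : Set G) = ⊤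
  · rw [genGame_of_closure_eq_top hP, PGame.grundyValue_zero, h_terminal P hP, Nat.cast_zero]
  have ih (g : {g // g ∉ P}) : PGame.grundyValue (genGame (insert g.1 P)) = ∗(f (insert g.1 P)) :=
    grundyValue_genGame_eq f h_terminal h_ne h_lt _
  rw [genGame_of_closure_ne_top hP, PGame.grundyValue]
  congr 1
  simp only [ih, Nimber.toOrdinal_toNimber]
  refine IsLeast.csInf_eq ⟨?_, fun b hb => not_lt.1 fun hlt => hb ?_⟩
  · rintro ⟨g, hg⟩
    exact h_ne P hP g.1 g.2 (Nat.cast_injective hg)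
  · obtain ⟨m, rfl⟩ := Ordinal.lt_omega0.1 (hlt.trans (Ordinal.natCast_lt_omega0 _))
    obtain ⟨g, hgP, hg⟩ := h_lt P hP m (by exact_mod_cast hlt)
    exact ⟨⟨g, hgP⟩, congrArg Nat.cast hg⟩
termination_by Fintype.card G - #P
decreasing_by
  have := Finset.card_insert_of_notMem g.2
  have := Finset.card_le_univ (insert g.1 P)
  omega

theorem grundyValue_genGame_eq_of_parity (Z : Finset G → Prop)
    (h_terminal : ∀ P : Finset G, Subgroup.closure (P : Set G) = ⊤ → Z P)
    (h_stable : ∀ P : Finset G, Subgroup.closure (P : Set G) ≠ ⊤ → Z P →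
      ∀ g ∉ P, ¬Z (insert g P))
    (h_enter : ∀ P : Finset G, ¬Z P → ∃ g ∉ P, Z (insert g P))
    (h_leave : ∀ P : Finset G, Odd #P → ¬Z P → ∃ g ∉ P, ¬Z (insert g P))
    (P : Finset G) :
    PGame.grundyValue (genGame P) = ∗(if Z P then 0 else if Even #P then 1 else 2 : ℕ) := by
  refine grundyValue_genGame_eq (fun P => if Z P then 0 else if Even #P then 1 else 2)
    (fun P hP => if_pos (h_terminal P hP)) (fun P hP g hg => ?_) (fun P hP m hm => ?_) P
  · by_cases hZ : Z P
    · rw [if_pos hZ, if_neg (h_stable P hP hZ g hg)]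
      split_ifs <;> decide
    · simp only [if_neg hZ, Finset.even_card_insert_iff hg, ← Nat.not_even_iff_odd]
      split_ifs <;> decide
  · have hZ : ¬Z P := fun hZ => by simp [if_pos hZ] at hm
    obtain rfl | rfl : m = 0 ∨ m = 1 := by split_ifs at hm <;> omega
    · obtain ⟨g, hg, hgZ⟩ := h_enter P hZ
      exact ⟨g, hg, if_pos hgZ⟩
    · have hO : Odd #P := Nat.not_even_iff_odd.1 fun hE => by simp [if_neg hZ, hE] at hm
      obtain ⟨g, hg, hgZ⟩ := h_leave P hO hZ
      exact ⟨g, hg, by rw [if_neg hgZ, if_pos ((Finset.even_card_insert_iff hg).2 hO)]⟩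

end genGame

theorem exists_closure_pair_eq_top_of_minGen_eq_two {G : Type} [Group G] [Fintype G]
    (hd : minGen G = 2) : ∃ x y : G, Subgroup.closure {x, y} = ⊤ := by
  have hne : {n | ∃ S : Finset G, #S = n ∧ Subgroup.closure (S : Set G) = ⊤}.Nonempty :=
    ⟨_, Finset.univ, rfl, by rw [Finset.coe_univ, Subgroup.closure_univ]⟩
  obtain ⟨S, hS, hgen⟩ := Nat.sInf_mem hne
  rw [← minGen, hd, Finset.card_eq_two] at hS
  obtain ⟨x, y, -, rfl⟩ := hS
  exact ⟨x, y, by rwa [Finset.coe_pair] at hgen⟩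

namespace Subgroup

variable {G : Type*} [Group G]

def IsOneStepFromTop (B : Subgroup G) : Prop := ∃ x : G, B ⊔ zpowers x = ⊤

theorem IsOneStepFromTop.mono {B B' : Subgroup G} (h : B.IsOneStepFromTop) (hle : B ≤ B') :
    B'.IsOneStepFromTop :=
  let ⟨x, hx⟩ := h
  ⟨x, top_le_iff.1 (hx ▸ sup_le_sup_right hle _)⟩

theorem IsOneStepFromTop.exists_notMem {B : Subgroup G} (h : B.IsOneStepFromTop) (hB : B ≠ ⊤) :
    ∃ x ∉ B, B ⊔ zpowers x = ⊤ := by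
  obtain ⟨x, hx⟩ := h
  refine ⟨x, fun hxB => hB ?_, hx⟩
  rwa [sup_eq_left.2 (zpowers_le.2 hxB)] at hx

theorem isOneStepFromTop_zpowers {x y : G} (hxy : closure {x, y} = ⊤) :
    (zpowers x).IsOneStepFromTop :=
  ⟨y, by rw [zpowers_eq_closure, zpowers_eq_closure, ← closure_union, Set.singleton_union, hxy]⟩

theorem prod_eq_top_iff {K H : Type*} [Group K] [Group H] {A : Subgroup K} {B : Subgroup H} :
    A.prod B = ⊤ ↔ A = ⊤ ∧ B = ⊤ := by
  refine ⟨fun h => ⟨eq_top_iff.2 fun k _ => (mem_prod.1 (h ▸ mem_top (k, 1))).1,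
    eq_top_iff.2 fun x _ => (mem_prod.1 (h ▸ mem_top (1, x))).2⟩, ?_⟩
  rintro ⟨rfl, rfl⟩
  exact top_prod_top

theorem card_prod {K H : Type*} [Group K] [Group H] (A : Subgroup K) (B : Subgroup H) :
    Nat.card (A.prod B) = Nat.card A * Nat.card B := by
  rw [Nat.card_congr (A.prodEquiv B).toEquiv, Nat.card_prod]

end Subgroup

section Coprime

open Subgroup

variable {K H : Type*} [Group K] [Group H]

theorem Prod.mk_one_mem_zpowers (hc : (Nat.card K).Coprime (Nat.card H)) (x : K × H) :
    (x.1, (1 : H)) ∈ zpowers x := by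
  have hpow : x ^ Nat.card H = (x.1 ^ Nat.card H, 1) := by
    rw [Prod.pow_def, pow_card_eq_one']
  have hinv : (x.1 ^ Nat.card H) ^ (Nat.card K).gcdB (Nat.card H) = x.1 :=
    (powCoprime hc).symm_apply_apply x.1
  have hmem : (x ^ Nat.card H) ^ (Nat.card K).gcdB (Nat.card H) ∈ zpowers x :=
    zpow_mem (pow_mem (mem_zpowers x) _) _
  rwa [hpow, Prod.pow_mk, hinv, one_zpow] at hmem

theorem Prod.one_mk_mem_zpowers (hc : (Nat.card K).Coprime (Nat.card H)) (x : K × H) :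
    ((1 : K), x.2) ∈ zpowers x := by
  have h : ((1 : K), x.2) = (x.1, (1 : H))⁻¹ * x := by ext <;> simp
  rw [h]
  exact mul_mem (inv_mem (Prod.mk_one_mem_zpowers hc x)) (mem_zpowers x)

theorem Subgroup.closure_eq_prod_of_coprime (hc : (Nat.card K).Coprime (Nat.card H))
    (s : Set (K × H)) :
    closure s = (closure (Prod.fst '' s)).prod (closure (Prod.snd '' s)) := by
  refine le_antisymm ((closure_le _).2 fun x hx =>
    mem_prod.2 ⟨subset_closure ⟨x, hx, rfl⟩, subset_closure ⟨x, hx, rfl⟩⟩) ?_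
  refine prod_le_iff.2 ⟨map_le_iff_le_comap.2 ((closure_le _).2 ?_),
    map_le_iff_le_comap.2 ((closure_le _).2 ?_)⟩
  · rintro _ ⟨x, hx, rfl⟩
    exact zpowers_le.2 (subset_closure hx) (Prod.mk_one_mem_zpowers hc x)
  · rintro _ ⟨x, hx, rfl⟩
    exact zpowers_le.2 (subset_closure hx) (Prod.one_mk_mem_zpowers hc x)

end Coprime

namespace IsKleinFour

variable {V : Type*} [Group V] [IsKleinFour V]

theorem zpowers_ne_top (v : V) : Subgroup.zpowers v ≠ ⊤ := fun h =>
  not_isCyclic (isCyclic_iff_exists_zpowers_eq_top.2 ⟨v, h⟩)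

theorem exists_ne_one : ∃ w : V, w ≠ 1 :=
  have : Nontrivial V := Finite.one_lt_card_iff_nontrivial.1 (by simp)
  exists_ne 1

theorem even_card_of_ne_bot {A : Subgroup V} (hA : A ≠ ⊥) : Even (Nat.card A) := by
  have hdvd := A.card_subgroup_dvd_card
  have hne : Nat.card A ≠ 1 := mt Subgroup.card_eq_one.1 hA
  rw [card_four (G := V)] at hdvd
  have hle := Nat.le_of_dvd (by norm_num) hdvd
  interval_cases h : Nat.card A <;> simp_all [Nat.even_iff]

theorem isOneStepFromTop_of_ne_bot {A : Subgroup V} (hA : A ≠ ⊥) : A.IsOneStepFromTop := by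
  by_cases hAtop : A = ⊤
  · exact ⟨1, by rw [hAtop, top_sup_eq]⟩
  obtain ⟨a, haA, ha1⟩ := A.bot_or_exists_ne_one.resolve_left hA
  obtain ⟨v, hvA⟩ := SetLike.exists_not_mem_of_ne_top A hAtop
  have hv1 : v ≠ 1 := fun h => hvA (h ▸ A.one_mem)
  have hav : a ≠ v := fun h => hvA (h ▸ haA)
  have haS : a ∈ A ⊔ Subgroup.zpowers v := Subgroup.mem_sup_left haA
  have hvS : v ∈ A ⊔ Subgroup.zpowers v := Subgroup.mem_sup_right (Subgroup.mem_zpowers v)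
  refine ⟨v, eq_top_iff.2 fun w _ => ?_⟩
  by_cases hw1 : w = 1
  · exact hw1 ▸ one_mem _
  by_cases hwa : w = a
  · exact hwa ▸ haS
  by_cases hwv : w = v
  · exact hwv ▸ hvS
  rw [eq_mul_of_ne_all ha1 hv1 hav hw1 hwa hwv]
  exact mul_mem haS hvS

end IsKleinFour

instance : IsKleinFour (Multiplicative (ZMod 2) × Multiplicative (ZMod 2)) where
  card_four := by simp
  exponent_two := by simp [Monoid.exponent_prod, Monoid.exponent_multiplicative, ZMod.exponent]

section Projections

open Subgroup

variable {K H : Type*}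

def fstClosure [Group K] (P : Finset (K × H)) : Subgroup K :=
  closure (Prod.fst '' (P : Set (K × H)))

def sndClosure [Group H] (P : Finset (K × H)) : Subgroup H :=
  closure (Prod.snd '' (P : Set (K × H)))

theorem mem_fstClosure [Group K] {P : Finset (K × H)} {g : K × H} (hg : g ∈ P) :
    g.1 ∈ fstClosure P :=
  subset_closure ⟨g, hg, rfl⟩

theorem mem_sndClosure [Group H] {P : Finset (K × H)} {g : K × H} (hg : g ∈ P) :
    g.2 ∈ sndClosure P :=
  subset_closure ⟨g, hg, rfl⟩

theorem fstClosure_insert [Group K] [DecidableEq (K × H)] (g : K × H) (P : Finset (K × H)) :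
    fstClosure (insert g P) = zpowers g.1 ⊔ fstClosure P := by
  rw [fstClosure, fstClosure, Finset.coe_insert, Set.image_insert_eq, Set.insert_eq,
    Subgroup.closure_union, zpowers_eq_closure]

theorem sndClosure_insert [Group H] [DecidableEq (K × H)] (g : K × H) (P : Finset (K × H)) :
    sndClosure (insert g P) = zpowers g.2 ⊔ sndClosure P := by
  rw [sndClosure, sndClosure, Finset.coe_insert, Set.image_insert_eq, Set.insert_eq,
    Subgroup.closure_union, zpowers_eq_closure]

theorem fstClosure_insert_of_mem [Group K] [DecidableEq (K × H)] {P : Finset (K × H)}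
    {g : K × H} (h : g.1 ∈ fstClosure P) : fstClosure (insert g P) = fstClosure P := by
  rwa [fstClosure_insert, sup_eq_right, zpowers_le]

theorem sndClosure_insert_of_mem [Group H] [DecidableEq (K × H)] {P : Finset (K × H)}
    {g : K × H} (h : g.2 ∈ sndClosure P) : sndClosure (insert g P) = sndClosure P := by
  rwa [sndClosure_insert, sup_eq_right, zpowers_le]

variable [Group K] [Group H]

theorem coe_subset_fstClosure_prod_sndClosure (P : Finset (K × H)) :
    (P : Set (K × H)) ⊆ (fstClosure P).prod (sndClosure P) :=
  fun _ hg => mem_prod.2 ⟨mem_fstClosure hg, mem_sndClosure hg⟩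

theorem closure_eq_top_iff_of_coprime (hc : (Nat.card K).Coprime (Nat.card H))
    (P : Finset (K × H)) :
    closure (P : Set (K × H)) = ⊤ ↔ fstClosure P = ⊤ ∧ sndClosure P = ⊤ := by
  rw [closure_eq_prod_of_coprime hc, prod_eq_top_iff]
  rfl

theorem exists_insert_eq_top [DecidableEq (K × H)] {P : Finset (K × H)}
    (hA : (fstClosure P).IsOneStepFromTop) (hB : (sndClosure P).IsOneStepFromTop)
    (hP : ¬(fstClosure P = ⊤ ∧ sndClosure P = ⊤)) :
    ∃ g ∉ P, fstClosure (insert g P) = ⊤ ∧ sndClosure (insert g P) = ⊤ := by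
  by_cases hAtop : fstClosure P = ⊤
  · obtain ⟨x, hxB, hx⟩ := hB.exists_notMem fun hBtop => hP ⟨hAtop, hBtop⟩
    refine ⟨(1, x), fun hg => hxB (mem_sndClosure hg), ?_, ?_⟩
    · rw [fstClosure_insert, hAtop, sup_top_eq]
    · rw [sndClosure_insert, sup_comm]
      exact hx
  · obtain ⟨v, hvA, hv⟩ := hA.exists_notMem hAtop
    obtain ⟨x, hx⟩ := hB
    refine ⟨(v, x), fun hg => hvA (mem_fstClosure hg), ?_, ?_⟩
    · rw [fstClosure_insert, sup_comm]
      exact hv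
    · rw [sndClosure_insert, sup_comm]
      exact hx

end Projections

section Moves

open Subgroup

variable {K H : Type*} [Group K] [Group H] [DecidableEq (K × H)] {P : Finset (K × H)}

theorem exists_insert_fstClosure_eq_bot (hH : Odd (Nat.card H)) {x y : H}
    (hxy : closure {x, y} = ⊤) (hE : Even #P) (hA : fstClosure P = ⊥) :
    ∃ g ∉ P, fstClosure (insert g P) = ⊥ ∧ (sndClosure (insert g P)).IsOneStepFromTop := by
  obtain ⟨g, hg1, hgP, hB⟩ : ∃ g : K × H, g.1 = 1 ∧ g ∉ P ∧
      (zpowers g.2 ⊔ sndClosure P).IsOneStepFromTop := by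
    by_cases hB : (sndClosure P).IsOneStepFromTop
    · have hP : (P : Set (K × H)) ⊆ (⊥ : Subgroup K).prod (⊤ : Subgroup H) := fun g hg =>
        mem_prod.2 ⟨hA ▸ mem_fstClosure hg, mem_top _⟩
      have hcard : #P ≠ Nat.card ((⊥ : Subgroup K).prod (⊤ : Subgroup H)) := by
        rw [card_prod, card_bot, card_top, one_mul]
        exact fun h => Nat.not_even_iff_odd.2 hH (h ▸ hE)
      obtain ⟨g, hgK, hgP⟩ := Finset.exists_mem_notMem_of_card_ne_natCard hP hcard
      exact ⟨g, mem_bot.1 (mem_prod.1 hgK).1, hgP, hB.mono le_sup_right⟩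
    · have hx := isOneStepFromTop_zpowers hxy
      exact ⟨(1, x), rfl, fun hg => hB (hx.mono (zpowers_le.2 (mem_sndClosure hg))),
        hx.mono le_sup_left⟩
  refine ⟨g, hgP, ?_, by rwa [sndClosure_insert]⟩
  rw [fstClosure_insert, hg1, zpowers_one_eq_bot, hA, sup_bot_eq]

theorem exists_insert_sndClosure_eq_of_fstClosure_eq_bot (hA : fstClosure P = ⊥) {v : K}
    (hv : v ≠ 1) :
    ∃ g ∉ P, fstClosure (insert g P) ≠ ⊥ ∧ sndClosure (insert g P) = sndClosure P := by
  refine ⟨(v, 1), fun hg => hv (mem_bot.1 (hA ▸ mem_fstClosure hg)), ?_,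
    sndClosure_insert_of_mem (one_mem _)⟩
  rwa [fstClosure_insert, hA, sup_bot_eq, Ne, zpowers_eq_bot]

theorem exists_insert_fstClosure_eq_and_sndClosure_eq (hA : Even (Nat.card (fstClosure P)))
    (hO : Odd #P) :
    ∃ g ∉ P, fstClosure (insert g P) = fstClosure P ∧ sndClosure (insert g P) = sndClosure P := by
  have hcard : #P ≠ Nat.card ((fstClosure P).prod (sndClosure P)) := by
    rw [card_prod]
    exact fun h => Nat.not_even_iff_odd.2 hO (h ▸ hA.mul_right _)
  obtain ⟨g, hgK, hgP⟩ :=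
    Finset.exists_mem_notMem_of_card_ne_natCard (coe_subset_fstClosure_prod_sndClosure P) hcard
  exact ⟨g, hgP, fstClosure_insert_of_mem (mem_prod.1 hgK).1,
    sndClosure_insert_of_mem (mem_prod.1 hgK).2⟩

end Moves

section KleinProduct

open Subgroup

variable {V H : Type*} [Group V] [Group H]

def IsPPosition (P : Finset (V × H)) : Prop :=
  fstClosure P = ⊤ ∧ sndClosure P = ⊤ ∨
  Even #P ∧ fstClosure P ≠ ⊥ ∧ ¬(sndClosure P).IsOneStepFromTop ∨
  Odd #P ∧ fstClosure P = ⊥ ∧ (sndClosure P).IsOneStepFromTop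

variable [IsKleinFour V]

theorem not_isPPosition_empty : ¬IsPPosition (∅ : Finset (V × H)) := by
  have hA : fstClosure (∅ : Finset (V × H)) = ⊥ := by
    rw [fstClosure, Finset.coe_empty, Set.image_empty, Subgroup.closure_empty]
  rintro (⟨hT, -⟩ | ⟨-, hA', -⟩ | ⟨hO, -⟩)
  · exact IsKleinFour.zpowers_ne_top (1 : V) (by rw [zpowers_one_eq_bot, ← hA, hT])
  · exact hA' hA
  · exact Nat.not_odd_zero hO

variable [DecidableEq (V × H)] {P : Finset (V × H)}

theorem IsPPosition.not_insert (hP : ¬(fstClosure P = ⊤ ∧ sndClosure P = ⊤))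
    (hZ : IsPPosition P) {g : V × H} (hg : g ∉ P) : ¬IsPPosition (insert g P) := by
  rw [IsPPosition, fstClosure_insert, sndClosure_insert, Finset.even_card_insert_iff hg,
    Finset.odd_card_insert_iff hg]
  rcases hZ with hT | ⟨hE, hA, hB⟩ | ⟨hO, hA, hB⟩
  · exact absurd hT hP
  · rintro (⟨-, hB'⟩ | ⟨hO, -⟩ | ⟨-, hA', -⟩)
    · exact hB ⟨g.2, by rwa [sup_comm]⟩
    · exact Nat.not_even_iff_odd.2 hO hE
    · exact hA (le_bot_iff.1 (hA' ▸ le_sup_right))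
  · rintro (⟨hA', -⟩ | ⟨-, -, hB'⟩ | ⟨hE, -⟩)
    · rw [hA, sup_bot_eq] at hA'
      exact IsKleinFour.zpowers_ne_top _ hA'
    · exact hB' (hB.mono le_sup_right)
    · exact Nat.not_even_iff_odd.2 hO hE

theorem exists_insert_isPPosition (hH : Odd (Nat.card H)) {x y : H} (hxy : closure {x, y} = ⊤)
    (hZ : ¬IsPPosition P) : ∃ g ∉ P, IsPPosition (insert g P) := by
  by_cases hAB : fstClosure P ≠ ⊥ ∧ (sndClosure P).IsOneStepFromTop
  · obtain ⟨g, hg, hT⟩ := exists_insert_eq_top (IsKleinFour.isOneStepFromTop_of_ne_bot hAB.1)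
      hAB.2 fun hT => hZ (Or.inl hT)
    exact ⟨g, hg, Or.inl hT⟩
  rcases Nat.even_or_odd #P with hE | hO
  · have hA : fstClosure P = ⊥ := by
      by_contra hA
      exact hZ (Or.inr (Or.inl ⟨hE, hA, fun hB => hAB ⟨hA, hB⟩⟩))
    obtain ⟨g, hg, hA', hB'⟩ := exists_insert_fstClosure_eq_bot hH hxy hE hA
    exact ⟨g, hg, Or.inr (Or.inr ⟨(Finset.odd_card_insert_iff hg).2 hE, hA', hB'⟩)⟩
  · have hB : ¬(sndClosure P).IsOneStepFromTop := fun hB => by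
      by_cases hA : fstClosure P = ⊥
      · exact hZ (Or.inr (Or.inr ⟨hO, hA, hB⟩))
      · exact hAB ⟨hA, hB⟩
    obtain ⟨g, hg, hA', hB'⟩ : ∃ g ∉ P, fstClosure (insert g P) ≠ ⊥ ∧
        sndClosure (insert g P) = sndClosure P := by
      by_cases hA : fstClosure P = ⊥
      · obtain ⟨v, hv⟩ := IsKleinFour.exists_ne_one (V := V)
        exact exists_insert_sndClosure_eq_of_fstClosure_eq_bot hA hv
      · obtain ⟨g, hg, hA', hB'⟩ :=
          exists_insert_fstClosure_eq_and_sndClosure_eq (IsKleinFour.even_card_of_ne_bot hA) hO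
        exact ⟨g, hg, hA'.symm ▸ hA, hB'⟩
    exact ⟨g, hg, Or.inr (Or.inl ⟨(Finset.even_card_insert_iff hg).2 hO, hA', hB'.symm ▸ hB⟩)⟩

theorem exists_insert_not_isPPosition {x y : H} (hxy : closure {x, y} = ⊤) (hO : Odd #P)
    (hZ : ¬IsPPosition P) : ∃ g ∉ P, ¬IsPPosition (insert g P) := by
  have hT : ¬(fstClosure P = ⊤ ∧ sndClosure P = ⊤) := fun hT => hZ (Or.inl hT)
  by_cases hB : (sndClosure P).IsOneStepFromTop
  · have hA : fstClosure P ≠ ⊥ := fun hA => hZ (Or.inr (Or.inr ⟨hO, hA, hB⟩))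
    obtain ⟨g, hg, hA', hB'⟩ :=
      exists_insert_fstClosure_eq_and_sndClosure_eq (IsKleinFour.even_card_of_ne_bot hA) hO
    refine ⟨g, hg, ?_⟩
    rw [IsPPosition, hA', hB', Finset.odd_card_insert_iff hg]
    rintro (hT' | ⟨-, -, hB''⟩ | ⟨hE, -⟩)
    exacts [hT hT', hB'' hB, Nat.not_even_iff_odd.2 hO hE]
  · have hx := isOneStepFromTop_zpowers hxy
    have hg : ((1 : V), x) ∉ P := fun hg => hB (hx.mono (zpowers_le.2 (mem_sndClosure hg)))
    refine ⟨_, hg, ?_⟩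
    rw [IsPPosition, sndClosure_insert, Finset.odd_card_insert_iff hg]
    rintro (⟨-, hT'⟩ | ⟨-, -, hB'⟩ | ⟨hE, -⟩)
    · exact hB ⟨x, by rwa [sup_comm] at hT'⟩
    · exact hB' (hx.mono le_sup_left)
    · exact Nat.not_even_iff_odd.2 hO hE

end KleinProduct

theorem grundyValue_genGame_kleinFour_prod {V H : Type} [Group V] [Group H] [Fintype V]
    [Fintype H] [IsKleinFour V] [DecidableEq (V × H)] (hH : Odd (Nat.card H)) {x y : H}
    (hxy : Subgroup.closure {x, y} = ⊤) (P : Finset (V × H)) :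
    PGame.grundyValue (genGame P) =
      ∗(if IsPPosition P then 0 else if Even #P then 1 else 2 : ℕ) := by
  have hc : (Nat.card V).Coprime (Nat.card H) := by
    rw [IsKleinFour.card_four, show 4 = 2 ^ 2 from rfl]
    exact Nat.Coprime.pow_left 2 (Nat.coprime_two_left.2 hH)
  have hT (P : Finset (V × H)) := closure_eq_top_iff_of_coprime hc P
  exact grundyValue_genGame_eq_of_parity IsPPosition (fun P hP => Or.inl ((hT P).1 hP))
    (fun P hP hZ _ hg => hZ.not_insert (mt (hT P).2 hP) hg)
    (fun _ => exists_insert_isPPosition hH hxy) (fun _ => exists_insert_not_isPPosition hxy) P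

theorem nimGEN_Z2sq_times_odd_of_minGen_eq_two (H : Type) [Group H] [Fintype H]
    (hH : Odd (Fintype.card H)) (hd : minGen H = 2) :
    nimGEN ((Multiplicative (ZMod 2) × Multiplicative (ZMod 2)) × H) = ∗1 := by
  obtain ⟨x, y, hxy⟩ := exists_closure_pair_eq_top_of_minGen_eq_two hd
  rw [nimGEN, grundyValue_genGame_kleinFour_prod (Nat.card_eq_fintype_card (α := H) ▸ hH) hxy,
    if_neg not_isPPosition_empty, if_pos (by simp), Nat.cast_one]
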